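/- arXiv:1603.09029 — 5 statements merged into one kernel-verified Lean document; each statement's English description precedes it below -/
import Mathlib

section
/- Let g be a monotone set function with g strictly monotone in the sense that g(A) < g(A ∪ {x}) for x ∉ A, and let k ≥ 1 be an integer. If c(S) = (g(S))^k for all S, then g is cost-sensitively submodular with respect to c. -/
/-!
The cross-multiplied inequality compares the difference quotients of `t ↦ t ^ k` over the
intervals `[g A, g (A ∪ {x})]` and `[g B, g (B ∪ {x})]`. By monotonicity of `g` both endpoints
of the second interval lie to the right of those of the first, and secant slopes of a convex
function increase in both endpoints; `t ↦ t ^ k` is convex on `[0, ∞)`.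
-/

namespace ConvexOn

variable {𝕜 : Type*} [Field 𝕜] [LinearOrder 𝕜] [IsStrictOrderedRing 𝕜] {s : Set 𝕜} {f : 𝕜 → 𝕜}
  {x x' y y' : 𝕜}

theorem slope_le_slope (hf : ConvexOn 𝕜 s f) (hx : x ∈ s) (hx' : x' ∈ s) (hy : y ∈ s)
    (hy' : y' ∈ s) (hxx' : x < x') (hyy' : y < y') (hxy : x ≤ y) (hxy' : x' ≤ y') :
    slope f x x' ≤ slope f y y' :=
  calc slope f x x'
      ≤ slope f x y' :=
        hf.slope_mono hx ⟨hx', hxx'.ne'⟩ ⟨hy', (hxy.trans_lt hyy').ne'⟩ hxy'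
    _ = slope f y' x := slope_comm f x y'
    _ ≤ slope f y' y :=
        hf.slope_mono hy' ⟨hx, (hxy.trans_lt hyy').ne⟩ ⟨hy, hyy'.ne⟩ hxy
    _ = slope f y y' := slope_comm f y' y

theorem mul_sub_le_mul_sub (hf : ConvexOn 𝕜 s f) (hx : x ∈ s) (hx' : x' ∈ s) (hy : y ∈ s)
    (hy' : y' ∈ s) (hxx' : x ≤ x') (hyy' : y ≤ y') (hxy : x ≤ y) (hxy' : x' ≤ y') :
    (y' - y) * (f x' - f x) ≤ (x' - x) * (f y' - f y) := by
  rcases hxx'.eq_or_lt with rfl | hxx'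
  · simp
  rcases hyy'.eq_or_lt with rfl | hyy'
  · simp
  have key := hf.slope_le_slope hx hx' hy hy' hxx' hyy' hxy hxy'
  rw [slope_def_field, slope_def_field, div_le_div_iff₀ (sub_pos.2 hxx') (sub_pos.2 hyy')] at key
  linarith

end ConvexOn

theorem stmt2_general {α : Type*} [DecidableEq α]
    (g : Finset α → ℝ) (hg0 : ∀ S, 0 ≤ g S)
    (hmono : ∀ A B : Finset α, A ⊆ B → g A ≤ g B)
    (k : ℕ) (c : Finset α → ℝ) (hc : ∀ S, c S = (g S) ^ k) :
    ∀ A B : Finset α, ∀ x : α, A ⊆ B → x ∉ B →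
      (g (insert x A) - g A) * (c (insert x B) - c B) ≥
        (g (insert x B) - g B) * (c (insert x A) - c A) := by
  intro A B x hAB _
  simp only [hc]
  exact (convexOn_pow k).mul_sub_le_mul_sub (hg0 A) (hg0 _) (hg0 B) (hg0 _)
    (hmono _ _ (Finset.subset_insert x A)) (hmono _ _ (Finset.subset_insert x B))
    (hmono _ _ hAB) (hmono _ _ (Finset.insert_subset_insert x hAB))

theorem stmt2 {α : Type*} [DecidableEq α] [Fintype α]
    (g : Finset α → ℝ) (hg0 : ∀ S, 0 ≤ g S)
    (hmono : ∀ A B : Finset α, A ⊆ B → g A ≤ g B)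
    (hstrict : ∀ (A : Finset α) (x : α), x ∉ A → g A < g (insert x A))
    (k : ℕ) (hk : 1 ≤ k) (c : Finset α → ℝ) (hc : ∀ S, c S = (g S) ^ k) :
    ∀ A B : Finset α, ∀ x : α, A ⊆ B → x ∉ B →
      (g (insert x A) - g A) * (c (insert x B) - c B) ≥
        (g (insert x B) - g B) * (c (insert x A) - c A) :=
  stmt2_general g hg0 hmono k c hc
end

section
/- Let g be a strictly monotone nonnegative set function, and let c(S) = Σ_{i=1}^n a_i (g(S))^i where n ≥ 1, all a_i ≥ 0, and Σ a_i > 0. Then g is cost-sensitively submodular with respect to c, i.e., for all A ⊆ B ⊆ X and x ∉ B, (g(A∪{x}) − g(A))·(c(B∪{x}) − c(B)) ≥ (g(B∪{x}) − g(B))·(c(A∪{x}) − c(A)). -/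
/-!
Write `p t = ∑ aᵢ tⁱ`. Then `p t - p s = (t - s) * Q s t` with
`Q s t = ∑ aᵢ ∑_{j<i} tʲ s^(i-1-j)`, and `Q` is monotone in both arguments on `[0, ∞)`
because all coefficients are nonnegative. Since `g` is monotone, `Q (g A) (g (A ∪ {x}))` is at
most `Q (g B) (g (B ∪ {x}))`, and multiplying by the two nonnegative increments of `g` gives the
inequality.
-/

open Finset

theorem Finset.le_apply_union_of_le_apply_insert {α β : Type*} [DecidableEq α] [Preorder β]
    {f : Finset α → β} (hf : ∀ (S : Finset α) (x : α), x ∉ S → f S ≤ f (insert x S))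
    (A s : Finset α) : f A ≤ f (A ∪ s) := by
  induction s using Finset.induction_on with
  | empty => rw [union_empty]
  | insert y s _ ih =>
    rw [union_insert]
    by_cases hy : y ∈ A ∪ s
    · rwa [insert_eq_of_mem hy]
    · exact ih.trans (hf _ y hy)

theorem Finset.monotone_of_le_apply_insert {α β : Type*} [DecidableEq α] [Preorder β]
    {f : Finset α → β} (hf : ∀ (S : Finset α) (x : α), x ∉ S → f S ≤ f (insert x S)) :
    Monotone f := by
  intro A B hAB
  simpa [union_eq_right.mpr hAB] using le_apply_union_of_le_apply_insert hf A B

/-- The difference quotient `(p t - p s) / (t - s)` of `p t = ∑ i ∈ I, a i * t ^ i`,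
written without division. -/
def powerSumSlope (I : Finset ℕ) (a : ℕ → ℝ) (s t : ℝ) : ℝ :=
  ∑ i ∈ I, a i * ∑ j ∈ range i, t ^ j * s ^ (i - 1 - j)

theorem sum_mul_pow_sub_sum_mul_pow (I : Finset ℕ) (a : ℕ → ℝ) (s t : ℝ) :
    ∑ i ∈ I, a i * t ^ i - ∑ i ∈ I, a i * s ^ i = (t - s) * powerSumSlope I a s t := by
  rw [powerSumSlope, ← sum_sub_distrib, mul_sum]
  refine sum_congr rfl fun i _ => ?_
  rw [← mul_sub, ← geom_sum₂_mul t s i]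
  ring

theorem powerSumSlope_mono {I : Finset ℕ} {a : ℕ → ℝ} (ha : ∀ i ∈ I, 0 ≤ a i)
    {s s' t t' : ℝ} (hs : 0 ≤ s) (hss' : s ≤ s') (ht : 0 ≤ t) (htt' : t ≤ t') :
    powerSumSlope I a s t ≤ powerSumSlope I a s' t' := by
  unfold powerSumSlope
  gcongr with i hi j
  · exact ha i hi
  · exact pow_nonneg (ht.trans htt') j

theorem stmt3_general {α : Type*} [DecidableEq α]
    (g : Finset α → ℝ) (hg0 : ∀ S, 0 ≤ g S)
    (hstrict : ∀ (A : Finset α) (x : α), x ∉ A → g A < g (insert x A))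
    (n : ℕ) (a : ℕ → ℝ)
    (ha : ∀ i ∈ Finset.Icc 1 n, 0 ≤ a i)
    (c : Finset α → ℝ) (hc : ∀ S, c S = ∑ i ∈ Finset.Icc 1 n, a i * (g S) ^ i) :
    ∀ A B : Finset α, ∀ x : α, A ⊆ B → x ∉ B →
      (g (insert x A) - g A) * (c (insert x B) - c B) ≥
        (g (insert x B) - g B) * (c (insert x A) - c A) := by
  intro A B x hAB hxB
  have hg : Monotone g := monotone_of_le_apply_insert fun S y hy => (hstrict S y hy).le
  have hincA : 0 ≤ g (insert x A) - g A := sub_nonneg.mpr (hstrict A x fun h => hxB (hAB h)).le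
  have hincB : 0 ≤ g (insert x B) - g B := sub_nonneg.mpr (hstrict B x hxB).le
  have hslope : powerSumSlope (Icc 1 n) a (g A) (g (insert x A)) ≤
      powerSumSlope (Icc 1 n) a (g B) (g (insert x B)) :=
    powerSumSlope_mono ha (hg0 _) (hg hAB) (hg0 _) (hg (insert_subset_insert x hAB))
  simp only [hc, sum_mul_pow_sub_sum_mul_pow]
  calc (g (insert x B) - g B) * ((g (insert x A) - g A) *
          powerSumSlope (Icc 1 n) a (g A) (g (insert x A)))
      = ((g (insert x A) - g A) * (g (insert x B) - g B)) *
          powerSumSlope (Icc 1 n) a (g A) (g (insert x A)) := by ring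
    _ ≤ ((g (insert x A) - g A) * (g (insert x B) - g B)) *
          powerSumSlope (Icc 1 n) a (g B) (g (insert x B)) := by gcongr
    _ = (g (insert x A) - g A) * ((g (insert x B) - g B) *
          powerSumSlope (Icc 1 n) a (g B) (g (insert x B))) := by ring

theorem stmt3 {α : Type*} [DecidableEq α] [Fintype α]
    (g : Finset α → ℝ) (hg0 : ∀ S, 0 ≤ g S)
    (hstrict : ∀ (A : Finset α) (x : α), x ∉ A → g A < g (insert x A))
    (n : ℕ) (hn : 1 ≤ n) (a : ℕ → ℝ)
    (ha : ∀ i ∈ Finset.Icc 1 n, 0 ≤ a i)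
    (hasum : 0 < ∑ i ∈ Finset.Icc 1 n, a i)
    (c : Finset α → ℝ) (hc : ∀ S, c S = ∑ i ∈ Finset.Icc 1 n, a i * (g S) ^ i) :
    ∀ A B : Finset α, ∀ x : α, A ⊆ B → x ∉ B →
      (g (insert x A) - g A) * (c (insert x B) - c B) ≥
        (g (insert x B) - g B) * (c (insert x A) - c A) :=
  stmt3_general g hg0 hstrict n a ha c hc
end

section
/- Consider two items x1, x2 with a single state, utility f(S) = Σ_{x∈S} w(x) where w(x1) = 1, w(x2) = p for p > 1, modular cost c with c({x1}) = 1, c({x2}) = p+1, and budget K = p+1 (so at most one item can be selected). The greedy rule maximizing w(x)/c({x}) selects x1 (since 1/1 > p/(p+1)), achieving utility 1, while the optimal selection is {x2} with utility p. Hence the cost-average greedy achieves exactly a 1/p fraction of the optimum, which is less than any α > 0 for p > 1/α. -/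
lemma div_add_one_lt_one {K : Type*} [Field K] [LinearOrder K] [IsStrictOrderedRing K] {p : K}
    (hp : 0 < p + 1) : p / (p + 1) < 1 :=
  (div_lt_one hp).2 (lt_add_one p)

-- Both items together cost `p + 2 > p + 1`, so the feasible values are `0`, `1` and `p`.
lemma isGreatest_twoItemKnapsack {p : ℝ} (hp : 1 < p) :
    IsGreatest {vl : ℝ | ∃ S : Finset (Fin 2),
      (∑ x ∈ S, if x = 0 then (1 : ℝ) else p + 1) ≤ p + 1 ∧
        vl = ∑ x ∈ S, if x = 0 then (1 : ℝ) else p} p := by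
  refine ⟨⟨{1}, by simp, by simp⟩, ?_⟩
  rintro v ⟨S, hcost, rfl⟩
  fin_cases S <;> simp_all <;> linarith

theorem stmt13 (a : ℝ) (ha : 0 < a) :
    ∃ p : ℝ, 1 < p ∧
      -- weights and costs of the two items x₁ = 0 and x₂ = 1
      (let w : Fin 2 → ℝ := fun i => if i = 0 then 1 else p
       let cs : Fin 2 → ℝ := fun i => if i = 0 then 1 else p + 1
       -- the greedy benefit-per-cost rule prefers x₁
       w 0 / cs 0 > w 1 / cs 1 ∧
       -- greedy thus selects {x₁} (the budget K = p+1 allows at most one item),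
       -- achieving worst-case utility 1
       (∑ x ∈ ({0} : Finset (Fin 2)), w x) = 1 ∧
       -- the optimal budget-feasible value is p, attained at {x₂}
       IsGreatest {vl : ℝ | ∃ S : Finset (Fin 2),
          (∑ x ∈ S, cs x) ≤ p + 1 ∧ vl = ∑ x ∈ S, w x} p) ∧
      1 / p < a := by
  have hp : 1 < 1 + 1 / a := lt_add_of_pos_right 1 (one_div_pos.2 ha)
  refine ⟨1 + 1 / a, hp, ⟨?_, by simp, isGreatest_twoItemKnapsack hp⟩, ?_⟩
  · simpa using div_add_one_lt_one (by linarith : (0 : ℝ) < 1 + 1 / a + 1)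
  · exact (one_div_lt (zero_lt_one.trans hp) ha).2 (lt_one_add _)
end

section
/- Consider n+1 items x0, x1, …, xn with a single state, utility f(S) = Σ_{x∈S} w(x) where w(x0) = 2 and w(xi) = 1 for i ≥ 1, modular cost c({x0}) = n, c({xi}) = 1 for i ≥ 1, and budget K = n. The greedy rule maximizing w(x) selects x0 first (utility 2, exhausting the budget), while the feasible set {x1,…,xn} has utility n. Hence cost-insensitive greedy achieves a 2/n fraction of the optimum, which is less than any α > 0 for n > 2/α. -/
/-! Once `n ≥ 2`, no item is worth more than it costs, so every set within budget `n` is worth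
at most `n`; the items `x₁, …, xₙ` cost and are worth exactly `n`. -/

open Filter Finset

theorem exists_nat_ge_div_lt (c : ℝ) {a : ℝ} (ha : 0 < a) (m : ℕ) :
    ∃ n : ℕ, m ≤ n ∧ c / n < a :=
  ((eventually_ge_atTop m).and
    ((tendsto_const_div_atTop_nhds_zero_nat c).eventually (gt_mem_nhds ha))).exists

section Budget

variable {ι M : Type*} [AddCommMonoid M] [PartialOrder M] [IsOrderedAddMonoid M]

theorem isGreatest_budgetFeasible_sum_of_le_cost {w c : ι → M} {K : M} (hwc : ∀ i, w i ≤ c i)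
    {S : Finset ι} (hS : ∑ x ∈ S, c x ≤ K) (hSw : ∑ x ∈ S, w x = K) :
    IsGreatest {v : M | ∃ S : Finset ι, ∑ x ∈ S, c x ≤ K ∧ v = ∑ x ∈ S, w x} K := by
  refine ⟨⟨S, hS, hSw.symm⟩, ?_⟩
  rintro v ⟨T, hT, rfl⟩
  exact (sum_le_sum fun i _ => hwc i).trans hT

end Budget

theorem sum_compl_singleton_zero_ite (n : ℕ) (p : ℝ) :
    ∑ x ∈ ({0}ᶜ : Finset (Fin (n + 1))), (if x = 0 then p else 1) = n := by
  rw [sum_congr rfl fun x hx => if_neg (by simpa using hx)]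
  simp [card_compl]

theorem stmt14 (a : ℝ) (ha : 0 < a) :
    ∃ n : ℕ, 2 ≤ n ∧ (2 : ℝ) / n < a ∧
      (let w : Fin (n + 1) → ℝ := fun i => if i = 0 then 2 else 1
       let cs : Fin (n + 1) → ℝ := fun i => if i = 0 then n else 1
       -- the cost-insensitive greedy rule prefers x₀ over every other item
       (∀ i : Fin (n + 1), i ≠ 0 → w 0 > w i) ∧
       -- greedy selects {x₀}, exhausting the budget K = n, with value 2
       (∑ x ∈ ({0} : Finset (Fin (n + 1))), w x) = 2 ∧
       (∑ x ∈ ({0} : Finset (Fin (n + 1))), cs x) = n ∧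
       -- the optimal budget-feasible value is n
       IsGreatest {vl : ℝ | ∃ S : Finset (Fin (n + 1)),
          (∑ x ∈ S, cs x) ≤ n ∧ vl = ∑ x ∈ S, w x} n) := by
  obtain ⟨n, hn, hlt⟩ := exists_nat_ge_div_lt 2 ha 2
  refine ⟨n, hn, hlt, ?_⟩
  intro w cs
  have hwc : ∀ i, w i ≤ cs i := by
    intro i
    by_cases hi : i = 0
    · simp only [w, cs, hi, if_true]
      exact_mod_cast hn
    · simp [w, cs, hi]
  refine ⟨fun i hi => by simp [w, hi], by simp [w], by simp [cs], ?_⟩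
  exact isGreatest_budgetFeasible_sum_of_le_cost hwc
    (sum_compl_singleton_zero_ite n n).le (sum_compl_singleton_zero_ite n 2)
end

section
/- In the same instance as Theorem 3 (items x0,…,xn, w(x0)=2, w(xi)=1, c({x0})=n, c({xi})=1, modular c), with half budget K/2 = n/2, the optimal feasible value is ⌊n/2⌋ ≥ (n−1)/2, while cost-insensitive greedy with full budget n achieves 2. Hence for any α > 0 there is n such that the greedy value with full budget is less than α times the optimal value with half budget. -/
/-!
Within the budget `n / 2` the heavy item `x₀`, of cost `n`, is unaffordable, so a feasible set
consists of unit items only and its value is its size, at most `⌊n / 2⌋`; this bound is attained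
by any `⌊n / 2⌋` unit items. Taking `n = 2 m` with `m > 2 / α` makes the greedy value `2`
smaller than `α m`.
-/

open Finset

def weight (n : ℕ) (i : Fin (n + 1)) : ℝ := if i = 0 then 2 else 1

def cost (n : ℕ) (i : Fin (n + 1)) : ℝ := if i = 0 then n else 1

lemma sum_ite_eq_card_of_notMem {α R : Type*} [DecidableEq α] [AddCommMonoidWithOne R]
    {S : Finset α} {x₀ : α} (h : x₀ ∉ S) (a : R) :
    ∑ x ∈ S, (if x = x₀ then a else 1) = #S := by
  rw [sum_congr rfl fun x hx => if_neg (ne_of_mem_of_not_mem hx h), sum_const, nsmul_one]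

lemma cost_nonneg (n : ℕ) (i : Fin (n + 1)) : 0 ≤ cost n i := by
  unfold cost; split_ifs <;> positivity

def unitItems (n : ℕ) : Finset (Fin (n + 1)) :=
  univ.map ⟨Fin.succ ∘ Fin.castLE (Nat.div_le_self n 2),
    (Fin.succ_injective _).comp (Fin.castLE_injective _)⟩

lemma zero_notMem_unitItems (n : ℕ) : 0 ∉ unitItems n := by
  simp [unitItems, Fin.succ_ne_zero]

lemma card_unitItems (n : ℕ) : #(unitItems n) = n / 2 := by
  simp [unitItems]

lemma zero_notMem_of_sum_cost_le_half {n : ℕ} (hn : 0 < n) {S : Finset (Fin (n + 1))}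
    (hS : ∑ x ∈ S, cost n x ≤ (n : ℝ) / 2) : 0 ∉ S := by
  intro h₀
  have : (n : ℝ) ≤ ∑ x ∈ S, cost n x := single_le_sum (fun i _ => cost_nonneg n i) h₀
  have : (0 : ℝ) < n := by exact_mod_cast hn
  linarith

lemma card_le_of_sum_cost_le_half {n : ℕ} (hn : 0 < n) {S : Finset (Fin (n + 1))}
    (hS : ∑ x ∈ S, cost n x ≤ (n : ℝ) / 2) : #S ≤ n / 2 := by
  have h₀ := zero_notMem_of_sum_cost_le_half hn hS
  rw [show ∑ x ∈ S, cost n x = #S from sum_ite_eq_card_of_notMem h₀ (n : ℝ)] at hS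
  have : 2 * #S ≤ n := by exact_mod_cast (by linarith : (2 * #S : ℝ) ≤ n)
  omega

theorem isGreatest_weight_of_cost_le_half {n : ℕ} (hn : 0 < n) :
    IsGreatest {v : ℝ | ∃ S : Finset (Fin (n + 1)),
      ∑ x ∈ S, cost n x ≤ (n : ℝ) / 2 ∧ v = ∑ x ∈ S, weight n x} ((n / 2 : ℕ) : ℝ) := by
  constructor
  · refine ⟨unitItems n, ?_, ?_⟩
    · simp only [cost]
      rw [sum_ite_eq_card_of_notMem (zero_notMem_unitItems n), card_unitItems, le_div_iff₀ two_pos]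
      exact_mod_cast Nat.div_mul_le_self n 2
    · simp only [weight]
      rw [sum_ite_eq_card_of_notMem (zero_notMem_unitItems n), card_unitItems]
  · rintro v ⟨S, hS, rfl⟩
    simp only [weight]
    rw [sum_ite_eq_card_of_notMem (zero_notMem_of_sum_cost_le_half hn hS)]
    exact_mod_cast card_le_of_sum_cost_le_half hn hS

lemma sub_one_div_two_le_div_two (n : ℕ) : ((n : ℝ) - 1) / 2 ≤ ((n / 2 : ℕ) : ℝ) := by
  have : n ≤ 2 * (n / 2) + 1 := by omega
  have : (n : ℝ) ≤ 2 * (n / 2 : ℕ) + 1 := by exact_mod_cast this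
  linarith

theorem stmt15 (a : ℝ) (ha : 0 < a) :
    ∃ n : ℕ, 2 ≤ n ∧
      (let w : Fin (n + 1) → ℝ := fun i => if i = 0 then 2 else 1
       let cs : Fin (n + 1) → ℝ := fun i => if i = 0 then n else 1
       -- cost-insensitive greedy with full budget n selects only x₀, value 2
       (∀ i : Fin (n + 1), i ≠ 0 → w 0 > w i) ∧
       (∑ x ∈ ({0} : Finset (Fin (n + 1))), w x) = 2 ∧
       -- optimal value with half budget n/2 is ⌊n/2⌋
       IsGreatest {vl : ℝ | ∃ S : Finset (Fin (n + 1)),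
          (∑ x ∈ S, cs x) ≤ (n : ℝ) / 2 ∧ vl = ∑ x ∈ S, w x} ((n / 2 : ℕ) : ℝ) ∧
       ((n : ℝ) - 1) / 2 ≤ ((n / 2 : ℕ) : ℝ) ∧
       -- greedy with full budget achieves less than α times the optimum with half budget
       (2 : ℝ) < a * ((n / 2 : ℕ) : ℝ)) := by
  obtain ⟨m, hm⟩ := exists_nat_gt (2 / a)
  have hm₀ : 0 < m := by exact_mod_cast (div_pos two_pos ha).trans hm
  refine ⟨2 * m, by omega, ?_⟩
  intro w cs
  have half : 2 * m / 2 = m := by omega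
  refine ⟨fun i hi => by norm_num [w, hi], by simp [w],
    isGreatest_weight_of_cost_le_half (by omega), sub_one_div_two_le_div_two _, ?_⟩
  rw [half]
  rwa [div_lt_iff₀ ha, mul_comm] at hm
end
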